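/- arXiv:2603.03061 — 2 statements merged into one kernel-verified Lean document; each statement's English description precedes it below -/
import Mathlib

section
/- Let M₁, M₂ be symmetric positive definite n×n matrices, z₁, z₂ ∈ ℝ^n, and for λ ∈ [0,1] set M_λ = (1-λ)M₁ + λM₂ and z_λ = (1-λ)z₁ + λz₂. Then ⟨M_λ^{-1} z_λ, z_λ⟩ ≤ (1-λ)⟨M₁^{-1} z₁, z₁⟩ + λ⟨M₂^{-1} z₂, z₂⟩. -/
/-!
For positive definite `M` the quadratic form of the inverse has the variational description
`⟨M⁻¹z, z⟩ = max_x (2⟨x, z⟩ - ⟨Mx, x⟩)`, the maximum being attained at `x = M⁻¹z`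
(the gap is `⟨M(x - M⁻¹z), x - M⁻¹z⟩ ≥ 0`). For fixed `x` the expression maximised is linear
in the pair `(M, z)`, so the maximum is a convex function of `(M, z)`: evaluate the convex
combination at its own maximiser and bound the two resulting terms by their maxima.
-/

open Matrix

namespace Matrix

variable {ι R : Type*}

lemma PosDef.smul_add_smul {M₁ M₂ : Matrix ι ι ℝ} (h₁ : M₁.PosDef) (h₂ : M₂.PosDef)
    {a b : ℝ} (ha : 0 ≤ a) (hb : 0 ≤ b) (hab : 0 < a + b) : (a • M₁ + b • M₂).PosDef := by
  rcases ha.eq_or_lt with rfl | ha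
  · simpa using h₂.smul (by simpa using hab)
  · exact (h₁.smul ha).add_posSemidef (h₂.posSemidef.smul hb)

variable [Fintype ι]

def dualQuadForm [CommRing R] (M : Matrix ι ι R) (z x : ι → R) : R :=
  2 * (x ⬝ᵥ z) - (M *ᵥ x) ⬝ᵥ x

lemma dualQuadForm_smul_add_smul [CommRing R] (a b : R) (M₁ M₂ : Matrix ι ι R)
    (z₁ z₂ x : ι → R) :
    dualQuadForm (a • M₁ + b • M₂) (a • z₁ + b • z₂) x
      = a * dualQuadForm M₁ z₁ x + b * dualQuadForm M₂ z₂ x := by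
  simp only [dualQuadForm, add_mulVec, smul_mulVec, add_dotProduct, smul_dotProduct,
    dotProduct_add, dotProduct_smul, smul_eq_mul]
  ring

lemma IsHermitian.mulVec_dotProduct_comm {M : Matrix ι ι ℝ} (hM : M.IsHermitian) (u v : ι → ℝ) :
    (M *ᵥ u) ⬝ᵥ v = u ⬝ᵥ (M *ᵥ v) := by
  rw [dotProduct_mulVec, ← mulVec_transpose, ← conjTranspose_eq_transpose_of_trivial, hM.eq]

variable [DecidableEq ι]

lemma dualQuadForm_inv_mulVec {M : Matrix ι ι ℝ} (hM : IsUnit M.det) (z : ι → ℝ) :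
    dualQuadForm M z (M⁻¹ *ᵥ z) = (M⁻¹ *ᵥ z) ⬝ᵥ z := by
  rw [dualQuadForm, mulVec_mulVec, mul_nonsing_inv _ hM, one_mulVec, dotProduct_comm z]
  ring

lemma PosDef.dualQuadForm_le {M : Matrix ι ι ℝ} (hM : M.PosDef) (z x : ι → ℝ) :
    dualQuadForm M z x ≤ (M⁻¹ *ᵥ z) ⬝ᵥ z := by
  set w := M⁻¹ *ᵥ z
  have hMw : M *ᵥ w = z := by
    rw [mulVec_mulVec, mul_nonsing_inv _ hM.det_pos.ne'.isUnit, one_mulVec]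
  have hgap : w ⬝ᵥ z - dualQuadForm M z x = (x - w) ⬝ᵥ (M *ᵥ (x - w)) := by
    rw [dualQuadForm, mulVec_sub, dotProduct_sub, sub_dotProduct, sub_dotProduct, hMw,
      ← hM.isHermitian.mulVec_dotProduct_comm w x, hMw, dotProduct_comm z x,
      dotProduct_comm x (M *ᵥ x)]
    ring
  have hnonneg : 0 ≤ (x - w) ⬝ᵥ (M *ᵥ (x - w)) := by
    simpa using hM.posSemidef.dotProduct_mulVec_nonneg (x - w)
  linarith

theorem PosDef.isGreatest_dualQuadForm {M : Matrix ι ι ℝ} (hM : M.PosDef) (z : ι → ℝ) :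
    IsGreatest (Set.range (dualQuadForm M z)) ((M⁻¹ *ᵥ z) ⬝ᵥ z) :=
  ⟨⟨_, dualQuadForm_inv_mulVec hM.det_pos.ne'.isUnit z⟩, by
    rintro _ ⟨x, rfl⟩; exact hM.dualQuadForm_le z x⟩

end Matrix

/-- For symmetric positive definite matrices `M₁, M₂`,
vectors `z₁, z₂`, and `λ ∈ [0,1]`, with `M_λ = (1-λ)M₁ + λM₂` and
`z_λ = (1-λ)z₁ + λz₂`, one has
`⟨M_λ⁻¹ z_λ, z_λ⟩ ≤ (1-λ)⟨M₁⁻¹ z₁, z₁⟩ + λ⟨M₂⁻¹ z₂, z₂⟩`. -/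
theorem inv_quadratic_form_convex (n : ℕ)
    (M₁ M₂ : Matrix (Fin n) (Fin n) ℝ)
    (h₁ : M₁.PosDef) (h₂ : M₂.PosDef)
    (z₁ z₂ : Fin n → ℝ) (l : ℝ) (hl0 : 0 ≤ l) (hl1 : l ≤ 1) :
    (((1 - l) • M₁ + l • M₂)⁻¹ *ᵥ ((1 - l) • z₁ + l • z₂)) ⬝ᵥ
        ((1 - l) • z₁ + l • z₂)
      ≤ (1 - l) * ((M₁⁻¹ *ᵥ z₁) ⬝ᵥ z₁) + l * ((M₂⁻¹ *ᵥ z₂) ⬝ᵥ z₂) := by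
  have hl : 0 ≤ 1 - l := sub_nonneg.mpr hl1
  have hM : ((1 - l) • M₁ + l • M₂).PosDef := h₁.smul_add_smul h₂ hl hl0 (by simp)
  obtain ⟨⟨x, hx⟩, -⟩ := hM.isGreatest_dualQuadForm ((1 - l) • z₁ + l • z₂)
  rw [← hx, dualQuadForm_smul_add_smul]
  gcongr
  · exact (h₁.isGreatest_dualQuadForm z₁).2 ⟨x, rfl⟩
  · exact (h₂.isGreatest_dualQuadForm z₂).2 ⟨x, rfl⟩
end

section
/- Let K₁, K₂ ⊂ ℝ^n be compact convex sets of class C²_+ and λ ∈ [0,1]. At boundary points x₁ ∈ ∂K₁ and x₂ ∈ ∂K₂ with a common outer unit normal ξ, the Gaussian curvatures satisfy 1/𝒦_{∂K_λ}((1-λ)x₁ + λx₂) ≥ (1-λ)^{n-1}/𝒦_{∂K₁}(x₁) + λ^{n-1}/𝒦_{∂K₂}(x₂), where K_λ = (1-λ)K₁ + λK₂; in particular 𝒦_{∂K_λ}((1-λ)x₁+λx₂) ≤ min(𝒦_{∂K₁}(x₁)/(1-λ)^{n-1}, 𝒦_{∂K₂}(x₂)/λ^{n-1}) and for λ ∈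 (0,1), 𝒦_{∂K_λ} ≤ 𝒦_{∂K₁}(x₁) + 𝒦_{∂K₂}(x₂) at corresponding points. -/
/-!
Writing `B = √A M √A` with `M` positive semidefinite of eigenvalues `μᵢ ≥ 0` diagonalizes `A` and
`B` simultaneously: `det (a A + b B) = det A * ∏ (a + b μᵢ)`. Both determinant inequalities thus
become scalar ones: `∏ (x + y μᵢ) ≥ xᵐ + yᵐ ∏ μᵢ` by expanding the product, and
`∏ (1 - l + l μᵢ) ≥ ∏ μᵢ ^ l` by weighted AM-GM. The latter gives
`det ((1 - l) A₁ + l A₂) ≥ (det A₁) ^ (1 - l) (det A₂) ^ l ≥ min (det A₁) (det A₂)`,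
which bounds the curvature of the combination by `𝒦₁ + 𝒦₂`.
-/

open Matrix
open scoped ComplexOrder

namespace Matrix

variable {ι : Type*} [Fintype ι] [DecidableEq ι]

theorem IsHermitian.det_smul_one_add_smul {𝕜 : Type*} [RCLike 𝕜] {M : Matrix ι ι 𝕜}
    (hM : M.IsHermitian) (a b : ℝ) :
    (a • 1 + b • M).det = ∏ i, ((a + b * hM.eigenvalues i : ℝ) : 𝕜) := by
  have hcfc : a • 1 + b • M = cfc (fun x ↦ a + b * x) M := by
    rw [cfc_add .., cfc_const_mul .., cfc_const .., cfc_id' ..]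
    simp [Algebra.algebraMap_eq_smul_one]
  rw [hcfc, hM.cfc_eq]
  simp [IsHermitian.cfc, -Unitary.conjStarAlgAut_apply, det_diagonal]

open scoped MatrixOrder in
theorem PosDef.exists_det_smul_add_smul_eq {𝕜 : Type*} [RCLike 𝕜] {A B : Matrix ι ι 𝕜}
    (hA : A.PosDef) (hB : B.PosSemidef) :
    ∃ μ : ι → ℝ, (∀ i, 0 ≤ μ i) ∧
      ∀ a b : ℝ, (a • A + b • B).det = A.det * ∏ i, ((a + b * μ i : ℝ) : 𝕜) := by
  set S := CFC.sqrt A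
  have hS : S.IsHermitian := (CFC.sqrt_nonneg A).posSemidef.isHermitian
  have hSS : S * S = A := CFC.sqrt_mul_sqrt_self A hA.posSemidef.nonneg
  have hSdet : IsUnit S.det := by
    rw [isUnit_iff_ne_zero]
    intro h
    simpa [← hSS, det_mul, h] using hA.det_pos.ne'
  have hM : (S⁻¹ * B * S⁻¹).PosSemidef := by
    simpa [hS.inv.eq] using hB.conjTranspose_mul_mul_same S⁻¹
  refine ⟨hM.1.eigenvalues, hM.eigenvalues_nonneg, fun a b ↦ ?_⟩
  have hconj : a • A + b • B = S * (a • 1 + b • (S⁻¹ * B * S⁻¹)) * S := by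
    have hB' : S * (S⁻¹ * B * S⁻¹) * S = B := by
      rw [← mul_assoc, ← mul_assoc, mul_nonsing_inv S hSdet, one_mul, mul_assoc,
        nonsing_inv_mul S hSdet, mul_one]
    rw [Matrix.mul_add, Matrix.add_mul, Matrix.mul_smul, Matrix.smul_mul, Matrix.mul_smul,
      Matrix.smul_mul, mul_one, hSS, hB']
  rw [hconj, det_mul, det_mul, hM.1.det_smul_one_add_smul, ← hSS, det_mul]
  ring

theorem PosDef.pow_card_mul_det_add_pow_card_mul_det_le [Nonempty ι] {A B : Matrix ι ι ℝ}
    (hA : A.PosDef) (hB : B.PosSemidef) {x y : ℝ} (hx : 0 ≤ x) (hy : 0 ≤ y) :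
    x ^ Fintype.card ι * A.det + y ^ Fintype.card ι * B.det ≤ (x • A + y • B).det := by
  obtain ⟨μ, hμ, hdet⟩ := hA.exists_det_smul_add_smul_eq hB
  have hdetB : B.det = A.det * ∏ i, μ i := by simpa using hdet 0 1
  rw [hdet, hdetB]
  calc x ^ Fintype.card ι * A.det + y ^ Fintype.card ι * (A.det * ∏ i, μ i)
      = A.det * (∏ _i, x + ∏ i, y * μ i) := by
        rw [Finset.prod_mul_distrib, Finset.prod_const, Finset.prod_const, Finset.card_univ]
        ring
    _ ≤ A.det * ∏ i, (x + y * μ i) := by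
        gcongr
        · exact hA.det_pos.le
        · exact Finset.prod_add_prod_le (Finset.mem_univ (Classical.arbitrary ι)) le_rfl
            (fun i _ _ ↦ le_add_of_nonneg_right (mul_nonneg hy (hμ i)))
            (fun i _ _ ↦ le_add_of_nonneg_left hx) (fun _ _ ↦ hx)
            (fun i _ ↦ mul_nonneg hy (hμ i))

theorem PosDef.det_rpow_mul_det_rpow_le {A B : Matrix ι ι ℝ} (hA : A.PosDef) (hB : B.PosSemidef)
    {l : ℝ} (hl0 : 0 ≤ l) (hl1 : l ≤ 1) :
    A.det ^ (1 - l) * B.det ^ l ≤ ((1 - l) • A + l • B).det := by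
  obtain ⟨μ, hμ, hdet⟩ := hA.exists_det_smul_add_smul_eq hB
  have hdetB : B.det = A.det * ∏ i, μ i := by simpa using hdet 0 1
  have hA0 := hA.det_pos
  have hweighted_am_gm (i : ι) : μ i ^ l ≤ 1 - l + l * μ i := by
    simpa using Real.geom_mean_le_arith_mean2_weighted (sub_nonneg.2 hl1) hl0 zero_le_one (hμ i)
      (sub_add_cancel 1 l)
  rw [hdet, hdetB]
  calc A.det ^ (1 - l) * (A.det * ∏ i, μ i) ^ l
      = A.det * ∏ i, μ i ^ l := by
        rw [Real.mul_rpow hA0.le (Finset.prod_nonneg fun i _ ↦ hμ i), ← mul_assoc,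
          ← Real.rpow_add hA0, sub_add_cancel, Real.rpow_one,
          Real.finsetProd_rpow _ _ fun i _ ↦ hμ i]
    _ ≤ A.det * ∏ i, (1 - l + l * μ i) := by
        gcongr with i
        · exact fun i _ ↦ Real.rpow_nonneg (hμ i) l
        · exact hweighted_am_gm i

end Matrix

theorem Real.min_le_rpow_mul_rpow {a b l : ℝ} (ha : 0 ≤ a) (hb : 0 ≤ b) (hl0 : 0 ≤ l)
    (hl1 : l ≤ 1) : min a b ≤ a ^ (1 - l) * b ^ l := by
  have hmin := le_min ha hb
  calc min a b = min a b ^ (1 - l) * min a b ^ l := by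
        rw [← Real.rpow_add' hmin (by norm_num), sub_add_cancel, Real.rpow_one]
    _ ≤ a ^ (1 - l) * b ^ l := by
        gcongr
        · exact min_le_left a b
        · exact min_le_right a b

/-- Gaussian curvature under Minkowski combination, reduced
(via `1/𝒦_{∂K}(x) = det(∇²h_K(ξ) + h_K(ξ)I)` at `ξ = g_K(x)` and the linearity
`h_{K_λ} = (1-λ)h_{K₁} + λh_{K₂}`) to positive definite `(n-1)×(n-1)` matrices
`A₁, A₂` representing the curvature data of `K₁, K₂` at boundary points with a
common outer normal: with `𝒦ᵢ = (det Aᵢ)⁻¹` and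
`𝒦_λ = (det((1-λ)A₁ + λA₂))⁻¹`, one has
`1/𝒦_λ ≥ (1-λ)^{n-1}/𝒦₁ + λ^{n-1}/𝒦₂`; in particular
`(1-λ)^{n-1} 𝒦_λ ≤ 𝒦₁` and `λ^{n-1} 𝒦_λ ≤ 𝒦₂`, and for `λ ∈ (0,1)`,
`𝒦_λ ≤ 𝒦₁ + 𝒦₂`. -/
theorem gaussian_curvature_minkowski (n : ℕ) (hn : 2 ≤ n)
    (A₁ A₂ : Matrix (Fin (n - 1)) (Fin (n - 1)) ℝ)
    (h₁ : A₁.PosDef) (h₂ : A₂.PosDef)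
    (l : ℝ) (hl0 : 0 ≤ l) (hl1 : l ≤ 1)
    (𝒦₁ 𝒦₂ 𝒦l : ℝ)
    (hK1 : 𝒦₁ = (A₁.det)⁻¹) (hK2 : 𝒦₂ = (A₂.det)⁻¹)
    (hKl : 𝒦l = (((1 - l) • A₁ + l • A₂).det)⁻¹) :
    (1 - l) ^ (n - 1) * 𝒦₁⁻¹ + l ^ (n - 1) * 𝒦₂⁻¹ ≤ 𝒦l⁻¹ ∧
    (1 - l) ^ (n - 1) * 𝒦l ≤ 𝒦₁ ∧ l ^ (n - 1) * 𝒦l ≤ 𝒦₂ ∧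
    (0 < l → l < 1 → 𝒦l ≤ 𝒦₁ + 𝒦₂) := by
  have : Nonempty (Fin (n - 1)) := ⟨⟨0, by omega⟩⟩
  have ha := h₁.det_pos
  have hb := h₂.det_pos
  set D := ((1 - l) • A₁ + l • A₂).det
  have hsuper : (1 - l) ^ (n - 1) * A₁.det + l ^ (n - 1) * A₂.det ≤ D := by
    simpa using h₁.pow_card_mul_det_add_pow_card_mul_det_le h₂.posSemidef (sub_nonneg.2 hl1) hl0
  have hmin : min A₁.det A₂.det ≤ D :=
    (Real.min_le_rpow_mul_rpow ha.le hb.le hl0 hl1).trans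
      (h₁.det_rpow_mul_det_rpow_le h₂.posSemidef hl0 hl1)
  have hD : 0 < D := (lt_min ha hb).trans_le hmin
  subst hK1 hK2 hKl
  simp only [inv_inv]
  refine ⟨hsuper, ?_, ?_, fun _ _ ↦ ?_⟩
  · rw [mul_inv_le_iff₀ hD, le_inv_mul_iff₀ ha]
    linarith [mul_nonneg (pow_nonneg hl0 (n - 1)) hb.le]
  · rw [mul_inv_le_iff₀ hD, le_inv_mul_iff₀ hb]
    linarith [mul_nonneg (pow_nonneg (sub_nonneg.2 hl1) (n - 1)) ha.le]
  · calc D⁻¹ ≤ (min A₁.det A₂.det)⁻¹ := inv_anti₀ (lt_min ha hb) hmin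
      _ ≤ A₁.det⁻¹ + A₂.det⁻¹ := by
        rcases min_choice A₁.det A₂.det with h | h <;> rw [h] <;>
          linarith [inv_pos.2 ha, inv_pos.2 hb]
end
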